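/- Let 𝒳 be a nonempty finite type with |𝒳| = N, let P be a pmf on 𝒳 with P(x) ≥ p_min > 0 for all x, and let f : 𝒳 → ℝ satisfy f(x) > 0 for all x. Set s = ∑_x P(x) f(x) and let m = (1/N)∑_x f(x) be the mean of the values of f. Then √(∑_x (f(x) − m)²) ≤ (√2 / p_min) · s · √(∑_x (f(x) P(x)/s) · log(f(x)/s)). -/

import Mathlib

open Real Set


private lemma g_mono : MonotoneOn (fun t : ℝ => (t+1)*Real.log t - 2*(t-1)) (Set.Ioi 0) := by
  have hcont : ContinuousOn (fun t : ℝ => (t+1)*Real.log t - 2*(t-1)) (Set.Ioi 0) := by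
    apply ContinuousOn.sub
    · exact ((continuousOn_id.add continuousOn_const).mul
        (Real.continuousOn_log.mono (fun x hx => ne_of_gt (by exact hx))))
    · fun_prop
  refine monotoneOn_of_hasDerivWithinAt_nonneg (convex_Ioi 0) hcont
    (f' := fun t => Real.log t + (t+1)*t⁻¹ - 2) ?_ ?_
  · rw [interior_Ioi]
    intro t ht
    have ht0 : (0:ℝ) < t := ht
    have h2 : HasDerivAt (fun t : ℝ => (t+1)*Real.log t - 2*(t-1))
        (1 * Real.log t + (t+1)*t⁻¹ - 2*1) t :=
      (((hasDerivAt_id t).add_const 1).mul (Real.hasDerivAt_log ht0.ne')).sub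
        (((hasDerivAt_id t).sub_const 1).const_mul 2)
    show HasDerivWithinAt _ (Real.log t + (t+1)*t⁻¹ - 2) _ t
    have hv : Real.log t + (t+1)*t⁻¹ - 2 = 1 * Real.log t + (t+1)*t⁻¹ - 2*1 := by ring
    rw [hv]
    exact h2.hasDerivWithinAt
  · rw [interior_Ioi]
    intro t ht
    have ht0 : (0:ℝ) < t := ht
    have hlog : 1 - t⁻¹ ≤ Real.log t := Real.one_sub_inv_le_log_of_pos ht0
    have htinv : (t+1)*t⁻¹ = 1 + t⁻¹ := by field_simp
    show 0 ≤ Real.log t + (t+1)*t⁻¹ - 2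
    rw [htinv]
    linarith

private lemma key_ineq (t : ℝ) (ht : 0 < t) :
    3*(t-1)^2 ≤ (2*t+4)*(t*Real.log t - t + 1) := by
  set h : ℝ → ℝ := fun t => (2*t+4)*(t*Real.log t - t + 1) - 3*(t-1)^2 with hh
  have hderiv : ∀ x : ℝ, 0 < x →
      HasDerivAt h (4*((x+1)*Real.log x - 2*(x-1))) x := by
    intro x hx
    have h1 : HasDerivAt (fun t : ℝ => t*Real.log t) (1 * Real.log x + x * x⁻¹) x :=
      (hasDerivAt_id x).mul (Real.hasDerivAt_log hx.ne')
    have h2 : HasDerivAt (fun t : ℝ => t*Real.log t - t + 1)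
        (1 * Real.log x + x * x⁻¹ - 1) x := (h1.sub (hasDerivAt_id x)).add_const 1
    have h3 : HasDerivAt (fun t : ℝ => 2*t+4) 2 x := by
      simpa using ((hasDerivAt_id x).const_mul 2).add_const 4
    have h4 : HasDerivAt (fun t : ℝ => (t-1)^2) (2*(x-1)^1*1) x :=
      ((hasDerivAt_id x).sub_const 1).pow 2
    have h5 := (h3.mul h2).sub (h4.const_mul 3)
    have hxx : x * x⁻¹ = 1 := mul_inv_cancel₀ hx.ne'
    have e : 4*((x+1)*Real.log x - 2*(x-1)) = 2 * (x * log x - x + 1) + (2 * x + 4) * (1 * log x + x * x⁻¹ - 1) - 3 * (2 * (x - 1) ^ 1 * 1) := by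
      rw [hxx]; ring
    rw [e]
    exact h5
  have hcont : ∀ S : Set ℝ, S ⊆ Set.Ioi 0 → ContinuousOn h S := by
    intro S hS
    apply ContinuousOn.sub
    · exact (continuousOn_const.mul continuousOn_id |>.add continuousOn_const).mul
        (((continuousOn_id.mul (Real.continuousOn_log.mono
          (fun x hx => ne_of_gt (hS hx)))).sub continuousOn_id).add continuousOn_const)
    · fun_prop
  have h1val : h 1 = 0 := by simp [hh]
  suffices hfin : 0 ≤ h t by simpa [hh] using hfin
  rcases le_total t 1 with hle | hge
  · have hanti : AntitoneOn h (Set.Ioc 0 1) := by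
      refine antitoneOn_of_hasDerivWithinAt_nonpos (convex_Ioc 0 1)
        (hcont _ (fun x hx => hx.1))
        (f' := fun x => 4*((x+1)*Real.log x - 2*(x-1))) ?_ ?_
      · intro x hx
        rw [interior_Ioc] at hx ⊢
        exact (hderiv x hx.1).hasDerivWithinAt
      · intro x hx
        rw [interior_Ioc] at hx
        have hg := g_mono (Set.mem_Ioi.2 hx.1) (Set.mem_Ioi.2 one_pos) hx.2.le
        simp only [Real.log_one] at hg
        show 4*((x+1)*Real.log x - 2*(x-1)) ≤ 0
        linarith
    have := hanti (Set.mem_Ioc.2 ⟨ht, hle⟩) (Set.mem_Ioc.2 ⟨one_pos, le_refl 1⟩) hle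
    rw [h1val] at this
    exact this
  · have hmono : MonotoneOn h (Set.Ici 1) := by
      refine monotoneOn_of_hasDerivWithinAt_nonneg (convex_Ici 1)
        (hcont _ (fun x hx => Set.mem_Ioi.2 (lt_of_lt_of_le one_pos hx)))
        (f' := fun x => 4*((x+1)*Real.log x - 2*(x-1))) ?_ ?_
      · intro x hx
        rw [interior_Ici] at hx ⊢
        exact (hderiv x (lt_trans one_pos hx)).hasDerivWithinAt
      · intro x hx
        rw [interior_Ici] at hx
        have hg := g_mono (Set.mem_Ioi.2 one_pos) (Set.mem_Ioi.2 (lt_trans one_pos hx)) hx.le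
        simp only [Real.log_one] at hg
        show 0 ≤ 4*((x+1)*Real.log x - 2*(x-1))
        linarith
    have := hmono (Set.mem_Ici.2 (le_refl 1)) (Set.mem_Ici.2 hge) hge
    rw [h1val] at this
    exact this

private lemma key_ab {a b : ℝ} (ha : 0 < a) (hb : 0 < b) :
    3*(a-b)^2 ≤ (2*a+4*b)*(a*Real.log (a/b) - a + b) := by
  have ht : 0 < a / b := div_pos ha hb
  have hk := key_ineq (a/b) ht
  have e1 : 3*(a-b)^2 = b^2 * (3*((a/b)-1)^2) := by
    field_simp
  have e2 : (2*a+4*b)*(a*Real.log (a/b) - a + b)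
      = b^2 * ((2*(a/b)+4)*((a/b)*Real.log (a/b) - (a/b) + 1)) := by
    field_simp
  rw [e1, e2]
  exact mul_le_mul_of_nonneg_left hk (sq_nonneg b)

/-- ℓ2-ℓ1-Pinsker chain (proof of Lemma 5): the square root of the empirical variance
of the vector `(f x)_x` is bounded via the KL divergence of the induced posterior from
the prior. -/
theorem sqrt_empVar_le_pinsker
    {𝒳 : Type*} [Fintype 𝒳] [Nonempty 𝒳]
    (P : 𝒳 → ℝ) (p_min : ℝ) (hpmin : 0 < p_min)
    (hP0 : ∀ x, p_min ≤ P x) (hP1 : ∑ x, P x = 1)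
    (f : 𝒳 → ℝ) (hf : ∀ x, 0 < f x) :
    let N : ℕ := Fintype.card 𝒳;
    let s : ℝ := ∑ x, P x * f x;
    let m : ℝ := (1 / (N : ℝ)) * ∑ x, f x;
    Real.sqrt (∑ x, (f x - m) ^ 2) ≤
      (Real.sqrt 2 / p_min) * s *
        Real.sqrt (∑ x, (f x * P x / s) * Real.log (f x / s)) := by
  intro N s m
  have hPx : ∀ x, 0 < P x := fun x => lt_of_lt_of_le hpmin (hP0 x)
  have hs0 : 0 < s :=
    Finset.sum_pos (fun x _ => mul_pos (hPx x) (hf x)) Finset.univ_nonempty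
  set q : 𝒳 → ℝ := fun x => f x * P x / s with hq
  have hq0 : ∀ x, 0 < q x := fun x => div_pos (mul_pos (hf x) (hPx x)) hs0
  have hqsum : ∑ x, q x = 1 := by
    rw [hq]
    rw [← Finset.sum_div]
    rw [div_eq_one_iff_eq hs0.ne']
    exact Finset.sum_congr rfl (fun x _ => mul_comm _ _)
  have hqP : ∀ x, q x / P x = f x / s := by
    intro x
    rw [hq]
    field_simp [(hPx x).ne', hs0.ne']
  -- the KL sum
  set KL : ℝ := ∑ x, (f x * P x / s) * Real.log (f x / s) with hKL
  have hKLalt : ∑ x, (q x * Real.log (q x / P x) - q x + P x) = KL := by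
    rw [hKL]
    rw [Finset.sum_add_distrib, Finset.sum_sub_distrib, hqsum, hP1]
    have : ∀ x ∈ Finset.univ, q x * Real.log (q x / P x)
        = (f x * P x / s) * Real.log (f x / s) := by
      intro x _
      rw [hqP x]
    rw [Finset.sum_congr rfl this]
    ring
  have hKL0 : 0 ≤ KL := by
    rw [← hKLalt]
    apply Finset.sum_nonneg
    intro x _
    have hd : 0 < 2*q x + 4*P x := by linarith [hq0 x, hPx x]
    have := key_ab (hq0 x) (hPx x)
    nlinarith [sq_nonneg (q x - P x), hd]
  -- Pinsker-type step
  have pinsker : ∑ x, |q x - P x| ≤ Real.sqrt 2 * Real.sqrt KL := by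
    set u : 𝒳 → ℝ := fun x => (2*q x + 4*P x)/3 with hu
    set v : 𝒳 → ℝ := fun x => 3*(q x - P x)^2/(2*q x + 4*P x) with hv
    have hden : ∀ x, 0 < 2*q x + 4*P x := fun x => by nlinarith [hq0 x, hPx x]
    have hu0 : ∀ x, 0 ≤ u x := fun x => div_nonneg (hden x).le (by norm_num)
    have hv0 : ∀ x, 0 ≤ v x := fun x => div_nonneg (by positivity) (hden x).le
    have habs : ∀ x, |q x - P x| = Real.sqrt (u x) * Real.sqrt (v x) := by
      intro x
      rw [← Real.sqrt_mul (hu0 x)]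
      have : u x * v x = (q x - P x)^2 := by
        rw [hu, hv]
        field_simp [(hden x).ne']
      rw [this, Real.sqrt_sq_eq_abs]
    have step := Real.sum_sqrt_mul_sqrt_le Finset.univ hu0 hv0
    have husum : ∑ x, u x = 2 := by
      rw [hu, ← Finset.sum_div, Finset.sum_add_distrib, ← Finset.mul_sum, ← Finset.mul_sum,
        hqsum, hP1]
      norm_num
    have hvsum : ∑ x, v x ≤ KL := by
      rw [← hKLalt]
      apply Finset.sum_le_sum
      intro x _
      rw [hv, div_le_iff₀ (hden x)]
      have := key_ab (hq0 x) (hPx x)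
      rw [hqP x] at this
      rw [hqP x]
      linarith
    calc ∑ x, |q x - P x| = ∑ x, Real.sqrt (u x) * Real.sqrt (v x) :=
          Finset.sum_congr rfl (fun x _ => habs x)
      _ ≤ Real.sqrt (∑ x, u x) * Real.sqrt (∑ x, v x) := step
      _ ≤ Real.sqrt 2 * Real.sqrt KL := by
          rw [husum]
          exact mul_le_mul_of_nonneg_left (Real.sqrt_le_sqrt hvsum) (Real.sqrt_nonneg 2)
  -- step 1: the mean minimizes the sum of squares
  have hN0 : (0:ℝ) < (N : ℝ) := by
    have : 0 < Fintype.card 𝒳 := Fintype.card_pos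
    exact_mod_cast this
  have hsumf : ∑ x, f x = (N:ℝ) * m := by
    show ∑ x, f x = (N:ℝ) * ((1 / (N : ℝ)) * ∑ x, f x)
    field_simp
  have step1 : ∑ x, (f x - m)^2 ≤ ∑ x, (f x - s)^2 := by
    have e : ∑ x, (f x - s)^2
        = ∑ x, (f x - m)^2 + ((2*(m-s)) * ∑ x, f x + (N:ℝ)*((m-s)*(-(m+s)))) := by
      have expand : ∀ x ∈ Finset.univ, (f x - s)^2
          = (f x - m)^2 + ((2*(m-s))*f x + (m-s)*(-(m+s))) := fun x _ => by ring
      rw [Finset.sum_congr rfl expand, Finset.sum_add_distrib, Finset.sum_add_distrib,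
        ← Finset.mul_sum, Finset.sum_const, nsmul_eq_mul, Finset.card_univ]
    rw [e, hsumf]
    nlinarith [sq_nonneg (m - s), hN0]
  -- step 2: ℓ2 ≤ ℓ1
  have step2 : Real.sqrt (∑ x, (f x - s)^2) ≤ ∑ x, |f x - s| := by
    have hsq : ∑ x, (f x - s)^2 ≤ (∑ x, |f x - s|)^2 := by
      have h1 : ∀ x ∈ Finset.univ, |f x - s| * |f x - s|
          ≤ |f x - s| * ∑ y, |f y - s| := fun x _ =>
        mul_le_mul_of_nonneg_left
          (Finset.single_le_sum (f := fun y => |f y - s|) (fun y _ => abs_nonneg _)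
            (Finset.mem_univ x)) (abs_nonneg _)
      calc ∑ x, (f x - s)^2 = ∑ x, |f x - s| * |f x - s| := by
            refine Finset.sum_congr rfl fun x _ => ?_
            rw [sq, ← abs_mul_abs_self]
        _ ≤ ∑ x, |f x - s| * ∑ y, |f y - s| := Finset.sum_le_sum h1
        _ = (∑ x, |f x - s|)^2 := by rw [← Finset.sum_mul]; ring
    calc Real.sqrt (∑ x, (f x - s)^2) ≤ Real.sqrt ((∑ x, |f x - s|)^2) :=
          Real.sqrt_le_sqrt hsq
      _ = ∑ x, |f x - s| := Real.sqrt_sq (Finset.sum_nonneg fun x _ => abs_nonneg _)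
  -- step 3
  have step3 : ∑ x, |f x - s| ≤ (s / p_min) * ∑ x, |q x - P x| := by
    rw [Finset.mul_sum]
    apply Finset.sum_le_sum
    intro x _
    have hqPd : q x - P x = (P x / s) * (f x - s) := by
      rw [hq]
      field_simp
    have habs : |q x - P x| = (P x / s) * |f x - s| := by
      rw [hqPd, abs_mul, abs_of_pos (div_pos (hPx x) hs0)]
    rw [habs]
    have e : (s / p_min) * ((P x / s) * |f x - s|) = (P x / p_min) * |f x - s| := by
      field_simp
    rw [e]
    calc |f x - s| = 1 * |f x - s| := (one_mul _).symm
      _ ≤ (P x / p_min) * |f x - s| :=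
          mul_le_mul_of_nonneg_right ((one_le_div hpmin).2 (hP0 x)) (abs_nonneg _)
  -- assemble
  calc Real.sqrt (∑ x, (f x - m)^2)
      ≤ Real.sqrt (∑ x, (f x - s)^2) := Real.sqrt_le_sqrt step1
    _ ≤ ∑ x, |f x - s| := step2
    _ ≤ (s / p_min) * ∑ x, |q x - P x| := step3
    _ ≤ (s / p_min) * (Real.sqrt 2 * Real.sqrt KL) :=
        mul_le_mul_of_nonneg_left pinsker (div_nonneg hs0.le hpmin.le)
    _ = (Real.sqrt 2 / p_min) * s * Real.sqrt KL := by ring
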